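/- Let β, γ > 0 with 0 < β/γ < (√5 − 1)/2, and let (x^k, y^k) be generated by the iteration x^{k+1} ∈ prox_{β‖·‖₀}(y^k), y^{k+1} = x^{k+1} − (β/γ)K*(Ky^{k+1} − r), where KK* = I. Then the sequence F(x^k, y^k) := (1/2)‖Ky^k − r‖₂² + (γ/(2β))‖x^k − y^k‖₂² + γ‖x^k‖₀ is nonincreasing and convergent, and moreover Σ_k ‖x^{k+1} − x^k‖₂² < ∞ and Σ_k ‖y^{k+1} − y^k‖₂² < ∞; in particular ‖x^{k+1} − x^k‖₂ → 0 and ‖y^{k+1} − y^k‖₂ → 0. -/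
import Mathlib


open Finset Filter

open scoped Classical

/-- Euclidean norm on `Fin n → ℝ`. -/
noncomputable def l2norm {n : ℕ} (x : Fin n → ℝ) : ℝ := Real.sqrt (∑ i, x i ^ 2)

/-- The ℓ0 "norm": the number of nonzero components, as a real number. -/
noncomputable def l0 {n : ℕ} (x : Fin n → ℝ) : ℝ :=
  ((Finset.univ.filter fun i => x i ≠ 0).card : ℝ)

/-- The support of a vector. -/
noncomputable def supp {n : ℕ} (x : Fin n → ℝ) : Finset (Fin n) :=
  Finset.univ.filter fun i => x i ≠ 0

/-- The (set-valued) proximity operator of `β⁻¹`-scaled ℓ0 norm: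
`prox_{β‖·‖₀}(z) = argmin_x (1/(2β))‖x - z‖² + ‖x‖₀`. -/
noncomputable def proxSet {n : ℕ} (β : ℝ) (z : Fin n → ℝ) : Set (Fin n → ℝ) :=
  {x | ∀ w : Fin n → ℝ,
    (1 / (2 * β)) * (l2norm (x - z)) ^ 2 + l0 x ≤ (1 / (2 * β)) * (l2norm (w - z)) ^ 2 + l0 w}

/-- The coordinate projection onto `B_𝒩 = {x : supp x ⊆ 𝒩}`. -/
def Pproj {n : ℕ} (𝒩 : Finset (Fin n)) (y : Fin n → ℝ) : Fin n → ℝ :=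
  fun i => if i ∈ 𝒩 then y i else 0

/- Auxiliary lemmas -/

lemma l2sq {n : ℕ} (v : Fin n → ℝ) : (l2norm v) ^ 2 = ∑ i, v i ^ 2 :=
  Real.sq_sqrt (Finset.sum_nonneg fun i _ => sq_nonneg _)

lemma l2norm_nonneg' {n : ℕ} (v : Fin n → ℝ) : 0 ≤ l2norm v := Real.sqrt_nonneg _

lemma l0_nonneg' {n : ℕ} (v : Fin n → ℝ) : 0 ≤ l0 v := Nat.cast_nonneg _

lemma sum_sq_add' {n : ℕ} (p q : Fin n → ℝ) :
    ∑ i, (p i + q i) ^ 2 = ∑ i, p i ^ 2 + 2 * (∑ i, p i * q i) + ∑ i, q i ^ 2 := by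
  have h : ∀ i, (p i + q i) ^ 2 = p i ^ 2 + 2 * (p i * q i) + q i ^ 2 := fun i => by ring
  calc ∑ i, (p i + q i) ^ 2 = ∑ i, (p i ^ 2 + 2 * (p i * q i) + q i ^ 2) :=
        Finset.sum_congr rfl fun i _ => h i
    _ = _ := by rw [Finset.sum_add_distrib, Finset.sum_add_distrib, ← Finset.mul_sum]

lemma inner_swap' {d N : ℕ} (K : Matrix (Fin d) (Fin N) ℝ) (b : Fin d → ℝ) (u : Fin N → ℝ) :
    ∑ i, b i * K.mulVec u i = ∑ j, K.transpose.mulVec b j * u j := by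
  simp only [Matrix.mulVec, dotProduct, Matrix.transpose_apply, Finset.mul_sum,
    Finset.sum_mul]
  rw [Finset.sum_comm]
  exact Finset.sum_congr rfl fun j _ => Finset.sum_congr rfl fun i _ => by ring

lemma sum_mul_P' {d N : ℕ} (K : Matrix (Fin d) (Fin N) ℝ) (v : Fin N → ℝ) :
    ∑ j, K.transpose.mulVec (K.mulVec v) j * v j = ∑ i, (K.mulVec v i) ^ 2 := by
  rw [← inner_swap']
  exact Finset.sum_congr rfl fun i _ => (sq (K.mulVec v i)).symm

lemma sum_P_sq' {d N : ℕ} (K : Matrix (Fin d) (Fin N) ℝ) (hK : K * K.transpose = 1)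
    (v : Fin N → ℝ) :
    ∑ j, (K.transpose.mulVec (K.mulVec v) j) ^ 2 = ∑ i, (K.mulVec v i) ^ 2 := by
  have hPP : K.mulVec (K.transpose.mulVec (K.mulVec v)) = K.mulVec v := by
    rw [Matrix.mulVec_mulVec, hK, Matrix.one_mulVec]
  have h := inner_swap' K (K.mulVec v) (K.transpose.mulVec (K.mulVec v))
  rw [hPP] at h
  calc ∑ j, (K.transpose.mulVec (K.mulVec v) j) ^ 2
      = ∑ j, K.transpose.mulVec (K.mulVec v) j * K.transpose.mulVec (K.mulVec v) j :=
        Finset.sum_congr rfl fun j _ => sq _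
    _ = ∑ i, K.mulVec v i * K.mulVec v i := h.symm
    _ = _ := Finset.sum_congr rfl fun i _ => (sq _).symm

lemma Ksq_le' {d N : ℕ} (K : Matrix (Fin d) (Fin N) ℝ) (hK : K * K.transpose = 1)
    (v : Fin N → ℝ) : ∑ i, (K.mulVec v i) ^ 2 ≤ ∑ j, v j ^ 2 := by
  have hq0 : 0 ≤ ∑ i, (K.mulVec v i) ^ 2 := Finset.sum_nonneg fun i _ => sq_nonneg _
  have hV0 : (0:ℝ) ≤ ∑ j, v j ^ 2 := Finset.sum_nonneg fun j _ => sq_nonneg _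
  have hcs := Finset.sum_mul_sq_le_sq_mul_sq Finset.univ
    (fun j => K.transpose.mulVec (K.mulVec v) j) v
  rw [sum_mul_P', sum_P_sq' K hK] at hcs
  rcases eq_or_lt_of_le hq0 with h | h
  · rw [← h]; exact hV0
  · nlinarith [hcs]

set_option maxHeartbeats 1600000 in
/-- Convergence properties of the fixed-point proximity iteration
`x^{k+1} ∈ prox_{β‖·‖₀}(y^k)`, `y^{k+1} = x^{k+1} - (β/γ)Kᵀ(Ky^{k+1} - r)` when
`0 < β/γ < (√5 - 1)/2` and `K Kᵀ = I`: the objective values `F(x^k, y^k)` are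
nonincreasing and convergent, the increments are square-summable, and they tend to 0. -/
theorem fixed_point_iteration_convergence {d N : ℕ} (β γ : ℝ) (hβ : 0 < β) (hγ : 0 < γ)
    (hratio : β / γ < (Real.sqrt 5 - 1) / 2)
    (K : Matrix (Fin d) (Fin N) ℝ) (hK : K * K.transpose = 1) (r : Fin d → ℝ)
    (x y : ℕ → Fin N → ℝ)
    (hx : ∀ k : ℕ, x (k + 1) ∈ proxSet β (y k))
    (hy : ∀ k : ℕ, y (k + 1) =
      x (k + 1) - (β / γ) • (K.transpose.mulVec (K.mulVec (y (k + 1)) - r))) :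
    let F : ℕ → ℝ := fun k =>
      (1 / 2) * (l2norm (K.mulVec (y k) - r)) ^ 2 +
        (γ / (2 * β)) * (l2norm (x k - y k)) ^ 2 + γ * l0 (x k)
    (∀ k : ℕ, F (k + 1) ≤ F k) ∧
    (∃ l : ℝ, Filter.Tendsto F Filter.atTop (nhds l)) ∧
    Summable (fun k => (l2norm (x (k + 1) - x k)) ^ 2) ∧
    Summable (fun k => (l2norm (y (k + 1) - y k)) ^ 2) ∧
    Filter.Tendsto (fun k => l2norm (x (k + 1) - x k)) Filter.atTop (nhds 0) ∧
    Filter.Tendsto (fun k => l2norm (y (k + 1) - y k)) Filter.atTop (nhds 0) := by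
  intro F
  have hβ' : β ≠ 0 := ne_of_gt hβ
  have hγ' : γ ≠ 0 := ne_of_gt hγ
  have hβ2 : (0:ℝ) < 2 * β := by linarith
  have hcoef : (0:ℝ) < γ / (2 * β) := div_pos hγ hβ2
  have hFdef : ∀ k, F k = (1 / 2) * (l2norm (K.mulVec (y k) - r)) ^ 2 +
      (γ / (2 * β)) * (l2norm (x k - y k)) ^ 2 + γ * l0 (x k) := fun k => rfl
  clear_value F
  -- the key sufficient-decrease inequality
  have key : ∀ k : ℕ, F (k + 1) + (γ / (2 * β)) * (l2norm (y (k + 1) - y k)) ^ 2 ≤ F k := by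
    intro k
    have hAY : x (k + 1) - y (k + 1)
        = (β / γ) • (K.transpose.mulVec (K.mulVec (y (k + 1)) - r)) := by
      nth_rewrite 1 [hy k]
      exact sub_sub_cancel _ _
    -- abbreviations
    set b : Fin d → ℝ := K.mulVec (y (k + 1)) - r with hb
    set u : Fin N → ℝ := y k - y (k + 1) with hu
    set Cu : ℝ := ∑ i, b i * K.mulVec u i with hCu
    -- pointwise decompositions
    have hKu : K.mulVec u = K.mulVec (y k) - K.mulVec (y (k + 1)) := Matrix.mulVec_sub K _ _
    have hpt1 : ∀ i, (K.mulVec (y k) - r) i = b i + K.mulVec u i := by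
      intro i
      rw [hKu]
      simp only [hb, Pi.sub_apply]
      ring
    have E1 : ∑ i, ((K.mulVec (y k) - r) i) ^ 2
        = ∑ i, b i ^ 2 + 2 * Cu + ∑ i, (K.mulVec u i) ^ 2 := by
      calc ∑ i, ((K.mulVec (y k) - r) i) ^ 2 = ∑ i, (b i + K.mulVec u i) ^ 2 :=
            Finset.sum_congr rfl fun i _ => by rw [hpt1 i]
        _ = _ := sum_sq_add' _ _
    have hw : ∀ j, x (k + 1) j - y (k + 1) j = (β / γ) * (K.transpose.mulVec b) j := by
      intro j
      have h := congrFun hAY j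
      simpa [Pi.sub_apply, Pi.smul_apply, smul_eq_mul] using h
    have hcross : ∑ j, (x (k + 1) j - y (k + 1) j) * (-(u j)) = -((β / γ) * Cu) := by
      have h1 : ∑ j, (x (k + 1) j - y (k + 1) j) * (-(u j))
          = -((β / γ) * ∑ j, (K.transpose.mulVec b) j * u j) := by
        calc ∑ j, (x (k + 1) j - y (k + 1) j) * (-(u j))
            = ∑ j, (-(β / γ)) * ((K.transpose.mulVec b) j * u j) :=
              Finset.sum_congr rfl fun j _ => by rw [hw j]; ring
          _ = (-(β / γ)) * ∑ j, (K.transpose.mulVec b) j * u j :=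
              (Finset.mul_sum _ _ _).symm
          _ = _ := by ring
      rw [h1, ← inner_swap' K b u]
    have E2 : ∑ j, ((x (k + 1) - y k) j) ^ 2
        = ∑ j, (x (k + 1) j - y (k + 1) j) ^ 2 - 2 * ((β / γ) * Cu) + ∑ j, u j ^ 2 := by
      have hneg : ∑ j, (-(u j)) ^ 2 = ∑ j, u j ^ 2 :=
        Finset.sum_congr rfl fun j _ => by ring
      calc ∑ j, ((x (k + 1) - y k) j) ^ 2
          = ∑ j, ((x (k + 1) j - y (k + 1) j) + (-(u j))) ^ 2 := by
            refine Finset.sum_congr rfl fun j _ => ?_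
            simp only [hu, Pi.sub_apply]
            ring
        _ = ∑ j, (x (k + 1) j - y (k + 1) j) ^ 2
              + 2 * (∑ j, (x (k + 1) j - y (k + 1) j) * (-(u j))) + ∑ j, (-(u j)) ^ 2 :=
            sum_sq_add' _ _
        _ = _ := by rw [hcross, hneg]; ring
    -- the prox inequality, scaled by γ
    have hprox := hx k (x k)
    have hscale : ∀ a t : ℝ, γ * ((1 / (2 * β)) * a + t) = (γ / (2 * β)) * a + γ * t := by
      intro a t; field_simp
    have hproxγ : (γ / (2 * β)) * (l2norm (x (k + 1) - y k)) ^ 2 + γ * l0 (x (k + 1))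
        ≤ (γ / (2 * β)) * (l2norm (x k - y k)) ^ 2 + γ * l0 (x k) := by
      have h := mul_le_mul_of_nonneg_left hprox hγ.le
      rw [hscale, hscale] at h
      exact h
    -- pass to sums
    rw [l2sq, l2sq] at hproxγ
    rw [E2] at hproxγ
    have E2' : (γ / (2 * β)) * (∑ j, (x (k + 1) j - y (k + 1) j) ^ 2
          - 2 * ((β / γ) * Cu) + ∑ j, u j ^ 2)
        = (γ / (2 * β)) * ∑ j, (x (k + 1) j - y (k + 1) j) ^ 2 - Cu
          + (γ / (2 * β)) * ∑ j, u j ^ 2 := by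
      field_simp
    rw [E2'] at hproxγ
    -- rewrite the goal in terms of sums
    rw [hFdef, hFdef, l2sq, l2sq, l2sq, l2sq, l2sq]
    have hT1 : ∑ j, ((x (k + 1) - y (k + 1)) j) ^ 2
        = ∑ j, (x (k + 1) j - y (k + 1) j) ^ 2 :=
      Finset.sum_congr rfl fun j _ => by simp [Pi.sub_apply]
    have hU : ∑ j, ((y (k + 1) - y k) j) ^ 2 = ∑ j, u j ^ 2 := by
      refine Finset.sum_congr rfl fun j _ => ?_
      simp only [hu, Pi.sub_apply]
      ring
    have hb' : ∑ i, ((K.mulVec (y (k + 1)) - r) i) ^ 2 = ∑ i, b i ^ 2 := by rw [hb]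
    rw [hT1, hU, hb', E1]
    have hKu2 : (0:ℝ) ≤ ∑ i, (K.mulVec u i) ^ 2 := Finset.sum_nonneg fun i _ => sq_nonneg _
    linarith [hproxγ]
  -- part 1 : monotone
  have mono : ∀ k : ℕ, F (k + 1) ≤ F k := by
    intro k
    have h0 : 0 ≤ (γ / (2 * β)) * (l2norm (y (k + 1) - y k)) ^ 2 :=
      mul_nonneg hcoef.le (sq_nonneg _)
    exact le_trans (le_add_of_nonneg_right h0) (key k)
  -- nonnegativity of F
  have hF0 : ∀ k, 0 ≤ F k := by
    intro k
    have a1 : 0 ≤ (1 / 2 : ℝ) * (l2norm (K.mulVec (y k) - r)) ^ 2 :=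
      mul_nonneg (by norm_num) (sq_nonneg _)
    have a2 : 0 ≤ (γ / (2 * β)) * (l2norm (x k - y k)) ^ 2 :=
      mul_nonneg hcoef.le (sq_nonneg _)
    have a3 : 0 ≤ γ * l0 (x k) := mul_nonneg hγ.le (l0_nonneg' _)
    rw [hFdef]; linarith
  -- part 2 : convergence
  have hanti : Antitone F := antitone_nat_of_succ_le mono
  have hbdd : BddBelow (Set.range F) := ⟨0, by rintro z ⟨k, rfl⟩; exact hF0 k⟩
  have hconv : ∃ l : ℝ, Filter.Tendsto F Filter.atTop (nhds l) :=
    ⟨_, tendsto_atTop_ciInf hanti hbdd⟩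
  -- part 4 : summability of y-increments
  have hsumbd : ∀ n : ℕ,
      ∑ k ∈ Finset.range n, (l2norm (y (k + 1) - y k)) ^ 2 ≤ (2 * β / γ) * F 0 := by
    intro n
    have htel : ∑ k ∈ Finset.range n, (F k - F (k + 1)) = F 0 - F n :=
      Finset.sum_range_sub' F n
    have hle : ∑ k ∈ Finset.range n, (γ / (2 * β)) * (l2norm (y (k + 1) - y k)) ^ 2
        ≤ ∑ k ∈ Finset.range n, (F k - F (k + 1)) :=
      Finset.sum_le_sum fun k _ => by linarith [key k]
    rw [← Finset.mul_sum] at hle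
    have h2 : (γ / (2 * β)) * ∑ k ∈ Finset.range n, (l2norm (y (k + 1) - y k)) ^ 2 ≤ F 0 := by
      rw [htel] at hle
      linarith [hF0 n]
    have hone : (2 * β / γ) * (γ / (2 * β)) = 1 := by field_simp
    have h3 := mul_le_mul_of_nonneg_left h2 (le_of_lt (div_pos hβ2 hγ))
    calc ∑ k ∈ Finset.range n, (l2norm (y (k + 1) - y k)) ^ 2
        = (2 * β / γ) * ((γ / (2 * β)) * ∑ k ∈ Finset.range n, (l2norm (y (k + 1) - y k)) ^ 2) := by
          rw [← mul_assoc, hone, one_mul]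
      _ ≤ (2 * β / γ) * F 0 := h3
  have hs : Summable (fun k => (l2norm (y (k + 1) - y k)) ^ 2) :=
    summable_of_sum_range_le (fun k => sq_nonneg _) hsumbd
  -- x-increments are controlled by y-increments (for k ≥ 1)
  have hxd : ∀ k : ℕ, (l2norm (x (k + 1 + 1) - x (k + 1))) ^ 2
      ≤ (1 + β / γ) ^ 2 * (l2norm (y (k + 1 + 1) - y (k + 1))) ^ 2 := by
    intro k
    set v : Fin N → ℝ := y (k + 1 + 1) - y (k + 1) with hv
    have hpt : ∀ j, (x (k + 1 + 1) - x (k + 1)) j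
        = v j + (β / γ) * (K.transpose.mulVec (K.mulVec v)) j := by
      intro j
      have e2 := congrFun (hy (k + 1)) j
      have e1 := congrFun (hy k) j
      have hsub : K.transpose.mulVec (K.mulVec v) j
          = (K.transpose.mulVec (K.mulVec (y (k + 1 + 1)) - r)) j
            - (K.transpose.mulVec (K.mulVec (y (k + 1)) - r)) j := by
        have hvv : (K.mulVec (y (k + 1 + 1)) - r) - (K.mulVec (y (k + 1)) - r)
            = K.mulVec v := by
          rw [hv, Matrix.mulVec_sub]; abel
        rw [← hvv, Matrix.mulVec_sub]
        simp [Pi.sub_apply]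
      simp only [Pi.sub_apply, Pi.smul_apply, smul_eq_mul] at e1 e2 ⊢
      have hvj : v j = y (k + 1 + 1) j - y (k + 1) j := by simp [hv]
      rw [hvj, hsub]
      linarith [e1, e2]
    rw [l2sq, l2sq]
    have hq0 : (0:ℝ) ≤ ∑ i, (K.mulVec v i) ^ 2 := Finset.sum_nonneg fun i _ => sq_nonneg _
    have hqle : ∑ i, (K.mulVec v i) ^ 2 ≤ ∑ j, v j ^ 2 := Ksq_le' K hK v
    have hm : ∑ j, v j * ((β / γ) * (K.transpose.mulVec (K.mulVec v)) j)
        = (β / γ) * ∑ i, (K.mulVec v i) ^ 2 := by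
      rw [← sum_mul_P' K v, Finset.mul_sum]
      exact Finset.sum_congr rfl fun j _ => by ring
    have hsq2 : ∑ j, ((β / γ) * (K.transpose.mulVec (K.mulVec v)) j) ^ 2
        = (β / γ) ^ 2 * ∑ i, (K.mulVec v i) ^ 2 := by
      rw [← sum_P_sq' K hK v, Finset.mul_sum]
      exact Finset.sum_congr rfl fun j _ => by ring
    have hU' : ∑ j, ((y (k + 1 + 1) - y (k + 1)) j) ^ 2 = ∑ j, v j ^ 2 := by rw [hv]
    calc ∑ j, ((x (k + 1 + 1) - x (k + 1)) j) ^ 2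
        = ∑ j, (v j + (β / γ) * (K.transpose.mulVec (K.mulVec v)) j) ^ 2 :=
          Finset.sum_congr rfl fun j _ => by rw [hpt j]
      _ = ∑ j, v j ^ 2 + 2 * ((β / γ) * ∑ i, (K.mulVec v i) ^ 2)
            + (β / γ) ^ 2 * ∑ i, (K.mulVec v i) ^ 2 := by
          rw [sum_sq_add', hm, hsq2]
      _ ≤ (1 + β / γ) ^ 2 * ∑ j, ((y (k + 1 + 1) - y (k + 1)) j) ^ 2 := by
          rw [hU']
          have hc : (0:ℝ) < β / γ := div_pos hβ hγ
          nlinarith [mul_le_mul_of_nonneg_left hqle (by positivity : (0:ℝ) ≤ 2 * (β / γ)),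
            mul_le_mul_of_nonneg_left hqle (sq_nonneg (β / γ))]
  -- part 3 : summability of x-increments
  have hs1 : Summable (fun k => (l2norm (y (k + 1 + 1) - y (k + 1))) ^ 2) :=
    (summable_nat_add_iff 1).mpr hs
  have ht1 : Summable (fun k => (l2norm (x (k + 1 + 1) - x (k + 1))) ^ 2) :=
    Summable.of_nonneg_of_le (fun k => sq_nonneg _) hxd (hs1.mul_left _)
  have ht : Summable (fun k => (l2norm (x (k + 1) - x k)) ^ 2) :=
    (summable_nat_add_iff 1).mp ht1
  -- parts 5, 6 : increments tend to zero
  have htend : ∀ (z : ℕ → Fin N → ℝ),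
      Summable (fun k => (l2norm (z (k + 1) - z k)) ^ 2) →
      Filter.Tendsto (fun k => l2norm (z (k + 1) - z k)) Filter.atTop (nhds 0) := by
    intro z hz
    have h0 := hz.tendsto_atTop_zero
    have h1 : Filter.Tendsto (fun k => Real.sqrt ((l2norm (z (k + 1) - z k)) ^ 2))
        Filter.atTop (nhds (Real.sqrt 0)) :=
      (Real.continuous_sqrt.tendsto 0).comp h0
    rw [Real.sqrt_zero] at h1
    have heq : ∀ k, Real.sqrt ((l2norm (z (k + 1) - z k)) ^ 2) = l2norm (z (k + 1) - z k) :=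
      fun k => Real.sqrt_sq (l2norm_nonneg' _)
    simpa only [heq] using h1
  exact ⟨mono, hconv, ht, hs, htend x ht, htend y hs⟩
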